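/- Let Q0 be a finite nonempty type and C : Q0 → Q0 → ℤ a symmetric matrix with C i i = 2 for all i and C i j ≤ 0 for i ≠ j, with form (x, y) := Σ_{i,j} x i * C i j * y j. Let δ : Q0 → ℕ satisfy weak condition (∗) for C, and let d : Q0 → ℕ be such that supp d ∪ supp δ = Q0 and (d + n·δ, e_i) < 0 for every i ∈ Q0 and every n ∈ ℕ. Then for every real M > 0 and every real ε > 0 there exists N ∈ ℕ such that for all n ≥ N the following holds: for every decomposition d + n·δ = d^1 + … + d^k into nonzero dimension vectors with (d + n·δ, d + n·δ) − Σ_{j=1}^k (d^j, d^j) > −M, there exists an index j such that (d^j) i ≥ (n − ε·√n)·δ i for every i ∈ Q0, and moreover (δ, (d + n·δ) − d^j) = 0. -/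

import Mathlib

open Finset

/-- The bilinear form associated to an integer matrix `E`:
`⟨x, y⟩ = Σ_{i,j} x i * E i j * y j`. -/
def bform {Q0 : Type*} [Fintype Q0] (E : Q0 → Q0 → ℤ) (x y : Q0 → ℤ) : ℤ :=
  ∑ i, ∑ j, x i * E i j * y j

/-- A dimension vector `Q0 → ℕ` viewed as an integer vector. -/
def nvec {Q0 : Type*} (v : Q0 → ℕ) : Q0 → ℤ := fun i => (v i : ℤ)

/-- The underlying simple graph of a quiver with matrix `E`: `i` is adjacent to `j`
iff `i ≠ j` and the `(i,j)` entry is negative (for symmetric `E` this is the usual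
adjacency `E i j < 0`). -/
def quivGraph {Q0 : Type*} (E : Q0 → Q0 → ℤ) : SimpleGraph Q0 where
  Adj i j := i ≠ j ∧ (E i j < 0 ∨ E j i < 0)
  symm := ⟨fun _ _ h => ⟨h.1.symm, h.2.symm⟩⟩
  loopless := ⟨fun _ h => h.1 rfl⟩

/-- The subgraph of `quivGraph E` induced on the support of `δ`. -/
def suppGraph {Q0 : Type*} (E : Q0 → Q0 → ℤ) (δ : Q0 → ℕ) :
    SimpleGraph {i : Q0 // δ i ≠ 0} :=
  (quivGraph E).comap Subtype.val

/-- Condition (∗): `⟨e_i, δ⟩ < 0` for every vertex `i`, and any two connected components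
of the subgraph induced on `supp δ` are at distance at most one, i.e. either they are
joined by an edge or some vertex is adjacent to both. -/
def condStar {Q0 : Type*} [Fintype Q0] [DecidableEq Q0]
    (E : Q0 → Q0 → ℤ) (δ : Q0 → ℕ) : Prop :=
  (∀ i : Q0, bform E (Pi.single i 1) (nvec δ) < 0) ∧
    ∀ u v : {i : Q0 // δ i ≠ 0},
      (suppGraph E δ).Reachable u v ∨
        ∃ x y : {i : Q0 // δ i ≠ 0},
          (suppGraph E δ).Reachable u x ∧ (suppGraph E δ).Reachable v y ∧
            ((quivGraph E).Adj x.1 y.1 ∨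
              ∃ w : Q0, (quivGraph E).Adj w x.1 ∧ (quivGraph E).Adj w y.1)

/-- Weak condition (∗): as `condStar` but with `⟨e_i, δ⟩ ≤ 0`. -/
def condStarWeak {Q0 : Type*} [Fintype Q0] [DecidableEq Q0]
    (E : Q0 → Q0 → ℤ) (δ : Q0 → ℕ) : Prop :=
  (∀ i : Q0, bform E (Pi.single i 1) (nvec δ) ≤ 0) ∧
    ∀ u v : {i : Q0 // δ i ≠  0},
      (suppGraph E δ).Reachable u v ∨
        ∃ x y : {i : Q0 // δ i ≠ 0},
          (suppGraph E δ).Reachable u x ∧ (suppGraph E δ).Reachable v y ∧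
            ((quivGraph E).Adj x.1 y.1 ∨
              ∃ w : Q0, (quivGraph E).Adj w x.1 ∧ (quivGraph E).Adj w y.1)

/-!
Write θ = d + nδ and let `t a i ∈ [0, 1]` be the share of the part `d^a` at vertex `i`, so that
`d^a = t a * θ` and `Σ_a t a = 1`. Since the parts add up to θ,
`Σ_a (d^a, d^a) - (θ, θ) = -Σ_a (t a θ, (1 - t a) θ)`, and for a symmetric form

  `-(s θ, (1 - s) θ) = Σ_i s_i (1 - s_i) θ_i (-(e_i, θ)) + ½ Σ_{i,j} (-C_ij) θ_i θ_j (s_i - s_j)²`,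

a sum of nonnegative terms. The hypothesis bounds the total by `M`, hence every term: at a vertex
`i` of `supp δ`, where `θ_i ≥ n`, some part misses fewer than `M` of the `θ_i` units, and along an
edge at such a vertex the shares of a part differ by `O(√(M/n))`. So for large `n` that part holds
a majority at every neighbour of `i`, and condition (∗) makes it one and the same part `d^{a₀}` on
all of `supp δ`. At a vertex with `(δ, e_i) < 0` the factor `-(e_i, θ)` grows like `n`, so no
other part can meet `i` at all: there `d^{a₀}` is all of `θ_i`, whence `(δ, θ - d^{a₀}) = 0`.
-/

open Matrix

section FractionalSplitting

variable {Q0 ι : Type*} [Fintype Q0] [Fintype ι]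

def vertexLoss (A : Matrix Q0 Q0 ℝ) (θ s : Q0 → ℝ) (i : Q0) : ℝ :=
  s i * (1 - s i) * θ i * -(A *ᵥ θ) i

noncomputable def edgeLoss (A : Matrix Q0 Q0 ℝ) (θ s : Q0 → ℝ) (i j : Q0) : ℝ :=
  -A i j * θ i * θ j * (s i - s j) ^ 2 / 2

noncomputable def partLoss (A : Matrix Q0 Q0 ℝ) (θ s : Q0 → ℝ) : ℝ :=
  ∑ i, vertexLoss A θ s i + ∑ i, ∑ j, edgeLoss A θ s i j

theorem mul_dotProduct_mulVec_one_sub_mul {A : Matrix Q0 Q0 ℝ} (hA : A.IsSymm) (θ s : Q0 → ℝ) :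
    (s * θ) ⬝ᵥ A *ᵥ ((1 - s) * θ) = -partLoss A θ s := by
  set B : Q0 → Q0 → ℝ := fun i j => A i j * θ i * θ j
  have hswap : ∑ i, ∑ j, B i j * (s j * (s j - s i)) = ∑ i, ∑ j, B i j * (s i * (s i - s j)) := by
    rw [Finset.sum_comm]
    refine sum_congr rfl fun i _ => sum_congr rfl fun j _ => ?_
    simp only [B, hA.apply i j]
    ring
  have hsq : ∑ i, ∑ j, B i j * (s i - s j) ^ 2 / 2 = ∑ i, ∑ j, B i j * (s i * (s i - s j)) := by
    have hsplit : ∑ i, ∑ j, B i j * (s i - s j) ^ 2 =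
        ∑ i, ∑ j, B i j * (s i * (s i - s j)) + ∑ i, ∑ j, B i j * (s j * (s j - s i)) := by
      simp only [← sum_add_distrib]
      exact sum_congr rfl fun i _ => sum_congr rfl fun j _ => by ring
    simp only [← sum_div, hsplit, hswap]
    ring
  have hedge : ∑ i, ∑ j, edgeLoss A θ s i j = -∑ i, ∑ j, B i j * (s i - s j) ^ 2 / 2 := by
    simp only [edgeLoss, B, ← sum_neg_distrib]
    exact sum_congr rfl fun i _ => sum_congr rfl fun j _ => by ring
  rw [partLoss, hedge, hsq]
  simp only [vertexLoss, dotProduct, mulVec, B, mul_sum, ← sum_neg_distrib,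
    neg_add, neg_neg, ← sum_add_distrib]
  refine sum_congr rfl fun i _ => sum_congr rfl fun j _ => ?_
  simp only [Pi.mul_apply, Pi.sub_apply, Pi.one_apply]
  ring

theorem sum_dotProduct_mulVec_sub {A : Matrix Q0 Q0 ℝ} (θ : Q0 → ℝ) {t : ι → Q0 → ℝ}
    (ht : ∀ i, ∑ a, t a i = 1) :
    ∑ a, (t a * θ) ⬝ᵥ A *ᵥ (t a * θ) - θ ⬝ᵥ A *ᵥ θ =
      -∑ a, (t a * θ) ⬝ᵥ A *ᵥ ((1 - t a) * θ) := by
  have hθ : ∑ a, t a * θ = θ := by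
    ext i
    simp [Finset.sum_apply, ← sum_mul, ht]
  calc ∑ a, (t a * θ) ⬝ᵥ A *ᵥ (t a * θ) - θ ⬝ᵥ A *ᵥ θ
      = ∑ a, ((t a * θ) ⬝ᵥ A *ᵥ (t a * θ) - (t a * θ) ⬝ᵥ A *ᵥ θ) := by
        rw [sum_sub_distrib, ← sum_dotProduct, hθ]
    _ = _ := by
        rw [← sum_neg_distrib]
        refine sum_congr rfl fun a _ => ?_
        rw [← dotProduct_sub, ← dotProduct_neg, ← mulVec_sub, ← mulVec_neg]
        congr 2
        ext i
        simp only [Pi.sub_apply, Pi.mul_apply, Pi.neg_apply, Pi.one_apply]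
        ring

/-- A decomposition of `θ` into the parts `t a * θ`, `t a i` being the share of part `a` at
vertex `i`, whose defect is less than `M`. -/
structure SmallDefect (A : Matrix Q0 Q0 ℝ) (θ : Q0 → ℝ) (t : ι → Q0 → ℝ) (M : ℝ) : Prop where
  isSymm : A.IsSymm
  off_diag_nonpos : ∀ i j, i ≠ j → A i j ≤ 0
  nonneg : ∀ i, 0 ≤ θ i
  mulVec_le : ∀ i, (A *ᵥ θ) i ≤ -1
  frac_nonneg : ∀ a i, 0 ≤ t a i
  sum_frac : ∀ i, ∑ a, t a i = 1
  defect_lt : ∑ a, (t a * θ) ⬝ᵥ A *ᵥ (t a * θ) - θ ⬝ᵥ A *ᵥ θ < M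

namespace SmallDefect

variable {A : Matrix Q0 Q0 ℝ} {θ : Q0 → ℝ} {t : ι → Q0 → ℝ} {M : ℝ}

theorem frac_add_frac_le_one (h : SmallDefect A θ t M) {a b : ι} (hab : a ≠ b) (i : Q0) :
    t a i + t b i ≤ 1 := by
  classical
  rw [← sum_pair (f := (t · i)) hab, ← h.sum_frac i]
  exact sum_le_sum_of_subset_of_nonneg (subset_univ _) fun c _ _ => h.frac_nonneg c i

theorem frac_le_one (h : SmallDefect A θ t M) (a : ι) (i : Q0) : t a i ≤ 1 :=
  h.sum_frac i ▸ single_le_sum (f := (t · i)) (fun c _ => h.frac_nonneg c i) (mem_univ a)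

theorem eq_of_half_lt (h : SmallDefect A θ t M) {a b : ι} {i : Q0} (ha : 1 / 2 < t a i)
    (hb : 1 / 2 < t b i) : a = b := by
  by_contra hab
  linarith [h.frac_add_frac_le_one hab i]

theorem frac_mul_one_sub_mul_nonneg (h : SmallDefect A θ t M) (a : ι) (i : Q0) :
    0 ≤ t a i * (1 - t a i) * θ i :=
  mul_nonneg (mul_nonneg (h.frac_nonneg a i) (sub_nonneg.2 (h.frac_le_one a i))) (h.nonneg i)

theorem vertexLoss_nonneg (h : SmallDefect A θ t M) (a : ι) (i : Q0) :
    0 ≤ vertexLoss A θ (t a) i :=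
  mul_nonneg (h.frac_mul_one_sub_mul_nonneg a i) (by linarith [h.mulVec_le i])

theorem edgeLoss_nonneg (h : SmallDefect A θ t M) (a : ι) (i j : Q0) :
    0 ≤ edgeLoss A θ (t a) i j := by
  obtain rfl | hij := eq_or_ne i j
  · simp [edgeLoss]
  have := h.off_diag_nonpos i j hij
  have := h.nonneg i
  have := h.nonneg j
  have : 0 ≤ -A i j := by linarith
  unfold edgeLoss
  positivity

theorem sum_partLoss_lt (h : SmallDefect A θ t M) : ∑ a, partLoss A θ (t a) < M := by
  refine lt_of_eq_of_lt ?_ h.defect_lt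
  simp only [sum_dotProduct_mulVec_sub θ h.sum_frac, mul_dotProduct_mulVec_one_sub_mul h.isSymm,
    sum_neg_distrib, neg_neg]

theorem vertexLoss_le_partLoss (h : SmallDefect A θ t M) (a : ι) (i : Q0) :
    vertexLoss A θ (t a) i ≤ partLoss A θ (t a) :=
  le_add_of_le_of_nonneg (single_le_sum (fun j _ => h.vertexLoss_nonneg a j) (mem_univ i))
    (sum_nonneg fun j _ => sum_nonneg fun l _ => h.edgeLoss_nonneg a j l)

theorem edgeLoss_le_partLoss (h : SmallDefect A θ t M) (a : ι) (i j : Q0) :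
    edgeLoss A θ (t a) i j ≤ partLoss A θ (t a) :=
  calc edgeLoss A θ (t a) i j ≤ ∑ j, edgeLoss A θ (t a) i j :=
        single_le_sum (fun l _ => h.edgeLoss_nonneg a i l) (mem_univ j)
    _ ≤ ∑ i, ∑ j, edgeLoss A θ (t a) i j :=
        single_le_sum (fun l _ => sum_nonneg fun m _ => h.edgeLoss_nonneg a l m) (mem_univ i)
    _ ≤ partLoss A θ (t a) :=
        le_add_of_nonneg_left (sum_nonneg fun l _ => h.vertexLoss_nonneg a l)

theorem partLoss_nonneg (h : SmallDefect A θ t M) (a : ι) : 0 ≤ partLoss A θ (t a) :=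
  add_nonneg (sum_nonneg fun i _ => h.vertexLoss_nonneg a i)
    (sum_nonneg fun i _ => sum_nonneg fun j _ => h.edgeLoss_nonneg a i j)

theorem partLoss_lt (h : SmallDefect A θ t M) (a : ι) : partLoss A θ (t a) < M :=
  lt_of_le_of_lt (single_le_sum (fun b _ => h.partLoss_nonneg b) (mem_univ a)) h.sum_partLoss_lt

theorem sum_vertexLoss_lt (h : SmallDefect A θ t M) (i : Q0) :
    ∑ a, vertexLoss A θ (t a) i < M :=
  lt_of_le_of_lt (sum_le_sum fun a _ => h.vertexLoss_le_partLoss a i) h.sum_partLoss_lt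

theorem exists_one_sub_frac_mul_lt (h : SmallDefect A θ t M) (i : Q0) :
    ∃ a, (1 - t a i) * θ i < M := by
  have hne : (univ : Finset ι).Nonempty := by
    by_contra hempty
    simpa [not_nonempty_iff_eq_empty.1 hempty] using h.sum_frac i
  obtain ⟨b, -, hb⟩ := exists_max_image univ (t · i) hne
  refine ⟨b, lt_of_le_of_lt ?_ (h.sum_vertexLoss_lt i)⟩
  calc (1 - t b i) * θ i = ∑ a, t a i * (1 - t b i) * θ i := by
        rw [← sum_mul, ← sum_mul, h.sum_frac, one_mul]
    _ ≤ ∑ a, vertexLoss A θ (t a) i := sum_le_sum fun a _ => by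
        have := h.frac_nonneg a i
        have := h.nonneg i
        calc t a i * (1 - t b i) * θ i ≤ t a i * (1 - t a i) * θ i := by
              gcongr
              exact hb a (mem_univ a)
          _ ≤ vertexLoss A θ (t a) i := le_mul_of_one_le_right
              (h.frac_mul_one_sub_mul_nonneg a i) (by linarith [h.mulVec_le i])

theorem neg_mulVec_lt (h : SmallDefect A θ t M) {a : ι} {i : Q0} (ha : 1 ≤ t a i * θ i)
    (ha' : t a i ≤ 1 / 2) : -(A *ᵥ θ) i < 2 * M := by
  have hhalf : 1 / 2 ≤ t a i * θ i * (1 - t a i) := by nlinarith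
  have : -(A *ᵥ θ) i / 2 ≤ vertexLoss A θ (t a) i :=
    calc -(A *ᵥ θ) i / 2 = 1 / 2 * -(A *ᵥ θ) i := by ring
      _ ≤ t a i * θ i * (1 - t a i) * -(A *ᵥ θ) i :=
        mul_le_mul_of_nonneg_right hhalf (by linarith [h.mulVec_le i])
      _ = vertexLoss A θ (t a) i := by rw [vertexLoss]; ring
  linarith [h.vertexLoss_le_partLoss a i, h.partLoss_lt a]

theorem mul_sq_sub_frac_lt (h : SmallDefect A θ t M) (a : ι) {i j : Q0} (hij : A i j ≤ -1) :
    θ i * θ j * (t a i - t a j) ^ 2 < 2 * M := by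
  have hloss : edgeLoss A θ (t a) i j < M :=
    lt_of_le_of_lt (h.edgeLoss_le_partLoss a i j) (h.partLoss_lt a)
  have := h.nonneg i
  have := h.nonneg j
  have : 0 ≤ θ i * θ j * (t a i - t a j) ^ 2 := by positivity
  unfold edgeLoss at hloss
  nlinarith

theorem half_lt_frac (h : SmallDefect A θ t M) {n : ℝ} (hn : 32 * M ≤ n) {a : ι} {x w : Q0}
    (hx : n ≤ θ x) (hax : (1 - t a x) * θ x < M) (hw : 1 ≤ θ w) (hxw : x = w ∨ A x w ≤ -1) :
    1 / 2 < t a w := by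
  have hM : 0 < M := lt_of_le_of_lt
    (mul_nonneg (by linarith [h.frac_le_one a x]) (h.nonneg x)) hax
  have hMθ : 32 * M ≤ θ x := hn.trans hx
  have hstrong : 31 / 32 < t a x := by nlinarith
  rcases hxw with rfl | hxw
  · linarith
  have hedge : θ x * (t a x - t a w) ^ 2 < 2 * M := by
    refine lt_of_le_of_lt ?_ (h.mul_sq_sub_frac_lt a hxw)
    gcongr
    exact le_mul_of_one_le_right (h.nonneg x) hw
  have hsq : (t a x - t a w) ^ 2 < 1 / 16 := by nlinarith
  nlinarith

theorem frac_mul_lt_one (h : SmallDefect A θ t M) {a b : ι} {i : Q0} (ha : 1 / 2 < t a i)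
    (hba : b ≠ a) (hi : 2 * M ≤ -(A *ᵥ θ) i) : t b i * θ i < 1 := by
  by_contra! hb
  linarith [h.neg_mulVec_lt hb (by linarith [h.frac_add_frac_le_one hba i])]

end SmallDefect

end FractionalSplitting

theorem quivGraph_adj_le {Q0 : Type*} {E : Q0 → Q0 → ℤ} (hE : ∀ i j, E i j = E j i) {i j : Q0}
    (h : (quivGraph E).Adj i j) : E i j ≤ -1 := by
  obtain ⟨-, h | h⟩ := h <;> linarith [hE i j]

theorem condStarWeak.eq_of_adj {Q0 α : Type*} [Fintype Q0] [DecidableEq Q0]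
    {E : Q0 → Q0 → ℤ} {δ : Q0 → ℕ} (h : condStarWeak E δ) (f : Q0 → α)
    (hadj : ∀ x y, δ x ≠ 0 → δ y ≠ 0 → (quivGraph E).Adj x y → f x = f y)
    (hnbr : ∀ x y w, δ x ≠ 0 → δ y ≠ 0 → (quivGraph E).Adj w x → (quivGraph E).Adj w y →
      f x = f y)
    {x y : Q0} (hx : δ x ≠ 0) (hy : δ y ≠ 0) : f x = f y := by
  have hreach {u v : {i // δ i ≠ 0}} (huv : (suppGraph E δ).Reachable u v) : f u = f v := by
    obtain ⟨p⟩ := huv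
    induction p with
    | nil => rfl
    | @cons u w _ huw _ ih => exact (hadj _ _ u.2 w.2 huw).trans ih
  rcases h.2 ⟨x, hx⟩ ⟨y, hy⟩ with hxy | ⟨x', y', hxx', hyy', hx'y' | ⟨w, hwx, hwy⟩⟩
  · exact hreach hxy
  · exact (hreach hxx').trans ((hadj _ _ x'.2 y'.2 hx'y').trans (hreach hyy').symm)
  · exact (hreach hxx').trans ((hnbr _ _ w x'.2 y'.2 hwx hwy).trans (hreach hyy').symm)

theorem SmallDefect.exists_dominant_part {Q0 ι : Type*} [Fintype Q0] [DecidableEq Q0]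
    [Nonempty Q0] [Fintype ι] {A : Matrix Q0 Q0 ℝ} {θ : Q0 → ℝ} {t : ι → Q0 → ℝ} {M : ℝ}
    (h : SmallDefect A θ t M) {E : Q0 → Q0 → ℤ} {δ : Q0 → ℕ} (hδ : condStarWeak E δ)
    (hAE : ∀ x w, (quivGraph E).Adj x w → A x w ≤ -1) {n : ℝ} (hn : 32 * M ≤ n)
    (hθn : ∀ x, δ x ≠ 0 → n ≤ θ x) (hθ : ∀ w, 1 ≤ θ w) :
    ∃ a, ∀ x, δ x ≠ 0 → (1 - t a x) * θ x < M ∧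
      ∀ w, x = w ∨ (quivGraph E).Adj x w → 1 / 2 < t a w := by
  choose part hpart using h.exists_one_sub_frac_mul_lt
  have hmaj : ∀ x, δ x ≠ 0 → ∀ w, x = w ∨ (quivGraph E).Adj x w → 1 / 2 < t (part x) w :=
    fun x hx w hxw => h.half_lt_frac hn (hθn x hx) (hpart x) (hθ w) (hxw.imp_right (hAE x w))
  have hconst : ∀ x y, δ x ≠ 0 → δ y ≠ 0 → part x = part y := fun x y =>
    hδ.eq_of_adj part
      (fun x y hx hy hxy => h.eq_of_half_lt (hmaj x hx y (.inr hxy)) (hmaj y hy y (.inl rfl)))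
      (fun x y w hx hy hwx hwy =>
        h.eq_of_half_lt (hmaj x hx w (.inr hwx.symm)) (hmaj y hy w (.inr hwy.symm)))
  by_cases hsupp : ∃ y, δ y ≠ 0
  · obtain ⟨y, hy⟩ := hsupp
    exact ⟨part y, fun x hx => hconst x y hx hy ▸ ⟨hpart x, hmaj x hx⟩⟩
  · exact ⟨part (Classical.arbitrary Q0), fun x hx => (hsupp ⟨x, hx⟩).elim⟩

section IntegerForm

variable {Q0 ι : Type*} [Fintype Q0] [Fintype ι]

theorem bform_eq_dotProduct (E : Q0 → Q0 → ℤ) (x y : Q0 → ℤ) :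
    bform E x y = x ⬝ᵥ of E *ᵥ y := by
  simp [bform, dotProduct, mulVec, mul_sum, mul_assoc]

theorem bform_eq_sum_mulVec_mul {E : Q0 → Q0 → ℤ} (hE : ∀ i j, E i j = E j i) (x y : Q0 → ℤ) :
    bform E x y = ∑ i, (of E *ᵥ x) i * y i := by
  rw [bform_eq_dotProduct, dotProduct_mulVec, ← mulVec_transpose,
    (IsSymm.ext fun i j => hE j i : (of E).IsSymm).eq]
  rfl

theorem bform_eq_zero_of_mulVec_ne_zero {E : Q0 → Q0 → ℤ} (hE : ∀ i j, E i j = E j i)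
    {x y : Q0 → ℤ} (h : ∀ i, (of E *ᵥ x) i ≠ 0 → y i = 0) : bform E x y = 0 := by
  rw [bform_eq_sum_mulVec_mul hE]
  refine sum_eq_zero fun i _ => ?_
  by_cases hi : (of E *ᵥ x) i = 0
  · rw [hi, zero_mul]
  · rw [h i hi, mul_zero]

theorem bform_single_left [DecidableEq Q0] (E : Q0 → Q0 → ℤ) (x : Q0 → ℤ) (i : Q0) :
    bform E (Pi.single i 1) x = (of E *ᵥ x) i := by
  rw [bform_eq_dotProduct, single_one_dotProduct]

theorem bform_single_right [DecidableEq Q0] {E : Q0 → Q0 → ℤ} (hE : ∀ i j, E i j = E j i)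
    (x : Q0 → ℤ) (i : Q0) : bform E x (Pi.single i 1) = (of E *ᵥ x) i := by
  rw [bform_eq_sum_mulVec_mul hE]
  simp [Pi.single_apply]

theorem cast_bform_nvec (E : Q0 → Q0 → ℤ) (x y : Q0 → ℕ) :
    ((bform E (nvec x) (nvec y) : ℤ) : ℝ) =
      (fun i => (x i : ℝ)) ⬝ᵥ of (fun i j => (E i j : ℝ)) *ᵥ fun i => (y i : ℝ) := by
  simp [bform, nvec, dotProduct, mulVec, mul_sum, mul_assoc]

theorem cast_mulVec_nvec (E : Q0 → Q0 → ℤ) (x : Q0 → ℕ) (i : Q0) :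
    (((of E *ᵥ nvec x) i : ℤ) : ℝ) = (of (fun i j => (E i j : ℝ)) *ᵥ fun j => (x j : ℝ)) i := by
  simp [nvec, dotProduct, mulVec]

theorem mulVec_nvec_add_mul (E : Q0 → Q0 → ℤ) (d δ : Q0 → ℕ) (n : ℕ) (i : Q0) :
    (of E *ᵥ nvec fun j => d j + n * δ j) i = (of E *ᵥ nvec d) i + n * (of E *ᵥ nvec δ) i := by
  simp only [mulVec, dotProduct, nvec, of_apply, mul_sum, ← sum_add_distrib]
  push_cast
  exact sum_congr rfl fun j _ => by ring

theorem sub_le_neg_mulVec (E : Q0 → Q0 → ℤ) (d δ : Q0 → ℕ) (n : ℕ) {i : Q0}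
    (hi : (of E *ᵥ nvec δ) i < 0) :
    (n : ℝ) - (of E *ᵥ nvec d) i ≤
      -((of fun i j => (E i j : ℝ)) *ᵥ fun j => ((d j + n * δ j : ℕ) : ℝ)) i := by
  rw [← cast_mulVec_nvec, mulVec_nvec_add_mul]
  have : ((of E *ᵥ nvec δ) i : ℝ) ≤ -1 := by exact_mod_cast Int.le_sub_one_of_lt hi
  push_cast
  nlinarith

theorem smallDefect_of_sum_eq {C : Q0 → Q0 → ℤ} (hsymm : ∀ i j, C i j = C j i)
    (hoff : ∀ i j, i ≠ j → C i j ≤ 0) {τ : Q0 → ℕ} (hτ : ∀ i, τ i ≠ 0)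
    (hneg : ∀ i, (of C *ᵥ nvec τ) i < 0) {ds : ι → Q0 → ℕ} (hsum : ∀ i, ∑ a, ds a i = τ i)
    {M : ℝ} (hdefect : -M <
      ((bform C (nvec τ) (nvec τ) - ∑ a, bform C (nvec (ds a)) (nvec (ds a)) : ℤ) : ℝ)) :
    SmallDefect (of fun i j => (C i j : ℝ)) (fun i => (τ i : ℝ))
      (fun a i => (ds a i : ℝ) / τ i) M where
  isSymm := IsSymm.ext fun i j => by simp [hsymm j i]
  off_diag_nonpos i j hij := by simpa using hoff i j hij
  nonneg i := Nat.cast_nonneg _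
  mulVec_le i := by
    rw [← cast_mulVec_nvec]
    exact_mod_cast Int.le_sub_one_of_lt (hneg i)
  frac_nonneg a i := by positivity
  sum_frac i := by
    rw [← sum_div, ← Nat.cast_sum, hsum, div_self (Nat.cast_ne_zero.2 (hτ i))]
  defect_lt := by
    have hparts : ∀ a, ((fun i => (ds a i : ℝ) / τ i) * fun i => (τ i : ℝ)) =
        fun i => (ds a i : ℝ) :=
      fun a => funext fun i => div_mul_cancel₀ _ (Nat.cast_ne_zero.2 (hτ i))
    simp only [hparts, ← cast_bform_nvec]
    push_cast at hdefect
    linarith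

theorem SmallDefect.eq_of_half_lt_div {A : Matrix Q0 Q0 ℝ} {M : ℝ} {τ : Q0 → ℕ}
    (hτ : ∀ i, τ i ≠ 0) {ds : ι → Q0 → ℕ} (hsum : ∀ i, ∑ a, ds a i = τ i)
    (h : SmallDefect A (fun i => (τ i : ℝ)) (fun a i => (ds a i : ℝ) / τ i) M) {a : ι} {i : Q0}
    (ha : 1 / 2 < (ds a i : ℝ) / τ i) (hi : 2 * M ≤ -(A *ᵥ fun j => (τ j : ℝ)) i) :
    ds a i = τ i := by
  have hother : ∀ b ≠ a, ds b i = 0 := fun b hb => by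
    have := h.frac_mul_lt_one (b := b) ha hb hi
    rw [div_mul_cancel₀ _ (Nat.cast_ne_zero.2 (hτ i))] at this
    exact_mod_cast Nat.lt_one_iff.1 (by exact_mod_cast this)
  rw [← sum_eq_single a (fun b _ hb => hother b hb) (absurd (mem_univ a))]
  exact hsum i

theorem exists_adj_of_mulVec_neg {E : Q0 → Q0 → ℤ} {δ : Q0 → ℕ} {i : Q0}
    (h : (of E *ᵥ nvec δ) i < 0) : ∃ j, δ j ≠ 0 ∧ (j = i ∨ (quivGraph E).Adj j i) := by
  obtain ⟨j, -, hj⟩ := exists_lt_of_sum_lt (s := univ) (f := fun j => E i j * nvec δ j)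
    (g := fun _ => (0 : ℤ)) (by simpa [mulVec, dotProduct] using h)
  have hδj : 0 ≤ nvec δ j := Int.natCast_nonneg _
  refine ⟨j, fun h0 => by simp [nvec, h0] at hj, (eq_or_ne j i).imp_right fun hji =>
    ⟨hji, Or.inr (by nlinarith)⟩⟩

end IntegerForm

theorem decomp_has_large_part_general
    {Q0 : Type*} [Fintype Q0] [DecidableEq Q0] [Nonempty Q0]
    (C : Q0 → Q0 → ℤ) (hsymm : ∀ i j, C i j = C j i)
    (hoff : ∀ i j, i ≠ j → C i j ≤ 0)
    (δ : Q0 → ℕ) (hδ : condStarWeak C δ)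
    (d : Q0 → ℕ) (hsupp : ∀ i, d i ≠ 0 ∨ δ i ≠ 0)
    (hneg : ∀ (n : ℕ) (i : Q0),
      bform C (fun j => (d j : ℤ) + n * δ j) (Pi.single i 1) < 0) :
    ∀ M : ℝ, 0 < M → ∀ ε : ℝ, 0 < ε → ∃ N : ℕ, ∀ n ≥ N,
      ∀ k : ℕ, ∀ ds : Fin k → Q0 → ℕ,
        (∀ a, ds a ≠ 0) → (∀ i, ∑ a, ds a i = d i + n * δ i) →
        (((bform C (fun j => (d j : ℤ) + n * δ j) (fun j => (d j : ℤ) + n * δ j) -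
            ∑ a, bform C (nvec (ds a)) (nvec (ds a)) : ℤ) : ℝ) > -M) →
        ∃ a : Fin k,
          (∀ i, ((n : ℝ) - ε * Real.sqrt n) * (δ i : ℝ) ≤ (ds a i : ℝ)) ∧
            bform C (nvec δ) (fun i => ((d i : ℤ) + n * δ i) - ds a i) = 0 := by
  intro M hM ε hε
  have hlarge : ∀ᶠ n : ℕ in Filter.atTop, 1 ≤ n ∧ 32 * M ≤ n ∧ M ≤ ε * √n ∧
      ∀ i, 2 * M + (of C *ᵥ nvec d) i ≤ n := by
    have hcast := tendsto_natCast_atTop_atTop (R := ℝ)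
    exact (Filter.eventually_ge_atTop 1).and <| (hcast.eventually_ge_atTop _).and <|
      (((Real.tendsto_sqrt_atTop.comp hcast).const_mul_atTop hε).eventually_ge_atTop M).and
        (Filter.eventually_all.2 fun i => hcast.eventually_ge_atTop _)
  obtain ⟨N, hN⟩ := Filter.eventually_atTop.1 hlarge
  refine ⟨N, fun n hn k ds _ hdsum hdefect => ?_⟩
  obtain ⟨hn1, hn32, hnε, hnd⟩ := hN n hn
  set τ : Q0 → ℕ := fun i => d i + n * δ i
  have hτ : nvec τ = fun j => (d j : ℤ) + n * δ j := by ext; simp [τ, nvec]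
  have hτpos : ∀ i, τ i ≠ 0 := fun i => by
    rcases hsupp i with h | h <;> simp [τ, h, Nat.one_le_iff_ne_zero.1 hn1]
  have hS := smallDefect_of_sum_eq hsymm hoff hτpos
    (fun i => by rw [hτ, ← bform_single_right hsymm]; exact hneg n i) hdsum (by rwa [hτ])
  have hδ1 : ∀ i, δ i ≠ 0 → (1 : ℝ) ≤ δ i := fun i hi => by
    exact_mod_cast Nat.one_le_iff_ne_zero.2 hi
  obtain ⟨a₀, ha₀⟩ := hS.exists_dominant_part hδ
    (fun x w hxw => by simp only [of_apply]; exact_mod_cast quivGraph_adj_le hsymm hxw) hn32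
    (fun x hx => by push_cast [τ]; nlinarith [hδ1 x hx])
    (fun i => by exact_mod_cast Nat.one_le_iff_ne_zero.2 (hτpos i))
  refine ⟨a₀, fun i => ?_, bform_eq_zero_of_mulVec_ne_zero hsymm fun i hi => ?_⟩
  · rcases eq_or_ne (δ i) 0 with h0 | hi
    · simp [h0]
    have hlt := (ha₀ i hi).1
    rw [sub_mul, one_mul, div_mul_cancel₀ _ (Nat.cast_ne_zero.2 (hτpos i))] at hlt
    push_cast [τ] at hlt
    nlinarith [hδ1 i hi]
  · have hlt := lt_of_le_of_ne (bform_single_left C _ i ▸ hδ.1 i) hi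
    obtain ⟨x, hx, hxi⟩ := exists_adj_of_mulVec_neg hlt
    have hall := hS.eq_of_half_lt_div hτpos hdsum ((ha₀ x hx).2 i hxi)
      (by linarith [sub_le_neg_mulVec C d δ n hlt, hnd i])
    simp [hall, τ]

/-- Lemma 5.1: let `C` be the Cartan matrix of a quiver without loops, `δ` satisfy weak (∗)
for `C`, `supp d ∪ supp δ = Q0` and `(d + nδ, e_i) < 0` for all `i` and `n`. Then for every
real `M > 0` and `ε > 0` and all large `n`: any decomposition `d + nδ = d^1 + … + d^k` into
nonzero dimension vectors with `(τ,τ) - Σ_j (d^j, d^j) > -M` contains a part `d^j` with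
`d^j ≥ (n - ε√n) δ` componentwise, and moreover `(δ, (d + nδ) - d^j) = 0`. -/
theorem decomp_has_large_part
    {Q0 : Type*} [Fintype Q0] [DecidableEq Q0] [Nonempty Q0]
    (C : Q0 → Q0 → ℤ) (hsymm : ∀ i j, C i j = C j i)
    (hdiag : ∀ i, C i i = 2) (hoff : ∀ i j, i ≠ j → C i j ≤ 0)
    (δ : Q0 → ℕ) (hδ : condStarWeak C δ)
    (d : Q0 → ℕ) (hsupp : ∀ i, d i ≠ 0 ∨ δ i ≠ 0)
    (hneg : ∀ (n : ℕ) (i : Q0),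
      bform C (fun j => (d j : ℤ) + n * δ j) (Pi.single i 1) < 0) :
    ∀ M : ℝ, 0 < M → ∀ ε : ℝ, 0 < ε → ∃ N : ℕ, ∀ n ≥ N,
      ∀ k : ℕ, ∀ ds : Fin k → Q0 → ℕ,
        (∀ a, ds a ≠ 0) → (∀ i, ∑ a, ds a i = d i + n * δ i) →
        (((bform C (fun j => (d j : ℤ) + n * δ j) (fun j => (d j : ℤ) + n * δ j) -
            ∑ a, bform C (nvec (ds a)) (nvec (ds a)) : ℤ) : ℝ) > -M) →
        ∃ a : Fin k,
          (∀ i, ((n : ℝ) - ε * Real.sqrt n) * (δ i : ℝ) ≤ (ds a i : ℝ)) ∧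
            bform C (nvec δ) (fun i => ((d i : ℤ) + n * δ i) - ds a i) = 0 :=
  decomp_has_large_part_general C hsymm hoff δ hδ d hsupp hneg
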